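/- arXiv:1609.04109 — 3 statements merged into one kernel-verified Lean document; each statement's English description precedes it below -/
import Mathlib

section
/- If φ satisfies (1 + (k₁+k₃)s² + k₂s⁴)φ''(s) = (k₁+k₂s²)(φ(s) − sφ'(s)), then for any constant u the function ψ := g_u(φ) defined by ψ(s) = √(1+us²)·φ(s/√(1+us²)) satisfies (1 + (k₁'+k₃')s² + k₂'s⁴)ψ''(s) = (k₁'+k₂'s²)(ψ(s) − sψ'(s)) with k₁' = k₁+u, k₃' = k₃+u, k₂' = k₂ + (k₁+k₃)u + u². -/
open Real

lemma hasDerivAt_W (u : ℝ) {s : ℝ} (h : 0 < 1 + u * s ^ 2) :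
    HasDerivAt (fun x => Real.sqrt (1 + u * x ^ 2)) (u * s / Real.sqrt (1 + u * s ^ 2)) s := by
  have h1 : HasDerivAt (fun x : ℝ => 1 + u * x ^ 2) (2 * u * s) s := by
    have := ((hasDerivAt_pow 2 s).const_mul u).const_add 1
    refine this.congr_deriv ?_
    ring
  have h2 := (Real.hasDerivAt_sqrt h.ne').comp s h1
  have hW : Real.sqrt (1 + u * s ^ 2) ≠ 0 := by positivity
  refine h2.congr_deriv ?_
  symm
  field_simp

lemma hasDerivAt_r (u : ℝ) {s : ℝ} (h : 0 < 1 + u * s ^ 2) :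
    HasDerivAt (fun x => x / Real.sqrt (1 + u * x ^ 2))
      (1 / Real.sqrt (1 + u * s ^ 2) ^ 3) s := by
  have hW : Real.sqrt (1 + u * s ^ 2) ≠ 0 := by positivity
  have hW2 : Real.sqrt (1 + u * s ^ 2) ^ 2 = 1 + u * s ^ 2 := Real.sq_sqrt h.le
  have h2 := (hasDerivAt_id s).div (hasDerivAt_W u h) hW
  refine h2.congr_deriv ?_
  symm
  field_simp
  simp only [id]
  linear_combination (-1 : ℝ) * hW2

lemma hasDerivAt_psi (u : ℝ) (φ : ℝ → ℝ) {s : ℝ} (h : 0 < 1 + u * s ^ 2)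
    (hφ : DifferentiableAt ℝ φ (s / Real.sqrt (1 + u * s ^ 2))) :
    HasDerivAt (fun x => Real.sqrt (1 + u * x ^ 2) * φ (x / Real.sqrt (1 + u * x ^ 2)))
      (u * s / Real.sqrt (1 + u * s ^ 2) * φ (s / Real.sqrt (1 + u * s ^ 2))
        + deriv φ (s / Real.sqrt (1 + u * s ^ 2)) / (1 + u * s ^ 2)) s := by
  have hWpos : 0 < Real.sqrt (1 + u * s ^ 2) := Real.sqrt_pos.mpr h
  have hW2 : Real.sqrt (1 + u * s ^ 2) ^ 2 = 1 + u * s ^ 2 := Real.sq_sqrt h.le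
  have hc := hφ.hasDerivAt.comp s (hasDerivAt_r u h)
  have htot := (hasDerivAt_W u h).mul hc
  refine htot.congr_deriv ?_
  symm
  simp only [Function.comp_apply]
  set W := Real.sqrt (1 + u * s ^ 2) with hWdef
  have hWne : W ≠ 0 := ne_of_gt hWpos
  rw [← hW2]
  field_simp

lemma hasDerivAt_psi1 (u : ℝ) (φ : ℝ → ℝ) {s : ℝ} (h : 0 < 1 + u * s ^ 2)
    (hφ : DifferentiableAt ℝ φ (s / Real.sqrt (1 + u * s ^ 2)))
    (hφ' : DifferentiableAt ℝ (deriv φ) (s / Real.sqrt (1 + u * s ^ 2))) :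
    HasDerivAt (fun x => u * x / Real.sqrt (1 + u * x ^ 2) * φ (x / Real.sqrt (1 + u * x ^ 2))
        + deriv φ (x / Real.sqrt (1 + u * x ^ 2)) / (1 + u * x ^ 2))
      (u / Real.sqrt (1 + u * s ^ 2) ^ 3 *
          (φ (s / Real.sqrt (1 + u * s ^ 2))
            - s / Real.sqrt (1 + u * s ^ 2) * deriv φ (s / Real.sqrt (1 + u * s ^ 2)))
        + deriv (deriv φ) (s / Real.sqrt (1 + u * s ^ 2)) / Real.sqrt (1 + u * s ^ 2) ^ 5) s := by
  have hWpos : 0 < Real.sqrt (1 + u * s ^ 2) := Real.sqrt_pos.mpr h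
  have hWne : Real.sqrt (1 + u * s ^ 2) ≠ 0 := ne_of_gt hWpos
  have hW2 : Real.sqrt (1 + u * s ^ 2) ^ 2 = 1 + u * s ^ 2 := Real.sq_sqrt h.le
  have hA : HasDerivAt (fun x : ℝ => u * x / Real.sqrt (1 + u * x ^ 2))
      ((u * 1 * Real.sqrt (1 + u * s ^ 2) - u * s * (u * s / Real.sqrt (1 + u * s ^ 2)))
        / Real.sqrt (1 + u * s ^ 2) ^ 2) s :=
    ((hasDerivAt_id' (x := s)).const_mul u).div (hasDerivAt_W u h) hWne
  have hB := hφ.hasDerivAt.comp s (hasDerivAt_r u h)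
  have hC := hφ'.hasDerivAt.comp s (hasDerivAt_r u h)
  have hq : HasDerivAt (fun x : ℝ => 1 + u * x ^ 2) (2 * u * s) s := by
    have := ((hasDerivAt_pow 2 s).const_mul u).const_add 1
    refine this.congr_deriv ?_
    ring
  have htot := (hA.mul hB).add (hC.div hq (ne_of_gt h))
  refine htot.congr_deriv ?_
  symm
  simp only [Function.comp_apply]
  set W := Real.sqrt (1 + u * s ^ 2) with hWdef
  rw [← hW2]
  field_simp
  linear_combination (-(u * W ^ 2 * φ (s / W))) * hW2

lemma final_algebra (k₁ k₂ k₃ u s W a b c : ℝ) (hW : W ≠ 0)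
    (hW2 : W ^ 2 = 1 + u * s ^ 2)
    (hode : (1 + (k₁ + k₃) * (s / W) ^ 2 + k₂ * (s / W) ^ 4) * c
      = (k₁ + k₂ * (s / W) ^ 2) * (a - s / W * b)) :
    (1 + (k₁ + u + (k₃ + u)) * s ^ 2 + (k₂ + (k₁ + k₃) * u + u ^ 2) * s ^ 4) *
        (u / W ^ 3 * (a - s / W * b) + c / W ^ 5)
      = (k₁ + u + (k₂ + (k₁ + k₃) * u + u ^ 2) * s ^ 2) *
          (W * a - s * (u * s / W * a + b / (1 + u * s ^ 2))) := by
  rw [show (1 : ℝ) + u * s ^ 2 = W ^ 2 from hW2.symm]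
  have h2 := hode
  field_simp at h2
  field_simp
  linear_combination h2 + ((-1)*k₁*W^4*a + (-1)*u*W^4*a + (-1)*k₂*s^2*W^4*a + (-1)*k₁*u*s^2*W^4*a + (-1)*k₃*u*s^2*W^4*a + (-1)*u^2*s^2*W^4*a + (-1)*W^2*c + (-1)*u*W^2*a + (-1)*k₂*s^2*W^2*a + (-1)*k₁*u*s^2*W^2*a + (-1)*k₃*u*s^2*W^2*a + (-1)*u^2*s^2*W^2*a + (1)*u*s*W*b + (1)*k₂*s^3*W*b + (1)*k₁*u*s^3*W*b + (1)*k₃*u*s^3*W*b + (1)*u^2*s^3*W*b + (-1)*k₁*s^2*c + (-1)*k₃*s^2*c + (-1)*u*s^2*c + (-1)*c) * hW2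



/-- If φ solves the Douglas ODE, then ψ = g_u(φ), i.e.
ψ(s) = √(1+us²)·φ(s/√(1+us²)), solves the Douglas ODE with
k₁' = k₁+u, k₂' = k₂+(k₁+k₃)u+u², k₃' = k₃+u. -/
theorem gTrans_preserves_douglas_ode (k₁ k₂ k₃ u : ℝ)
    (I : Set ℝ) (hI : IsOpen I) (hI0 : (0 : ℝ) ∈ I) (φ : ℝ → ℝ)
    (hφ₁ : ∀ s ∈ I, DifferentiableAt ℝ φ s)
    (hφ₂ : ∀ s ∈ I, DifferentiableAt ℝ (deriv φ) s)
    (hode : ∀ s ∈ I,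
      (1 + (k₁ + k₃) * s ^ 2 + k₂ * s ^ 4) * deriv (deriv φ) s
        = (k₁ + k₂ * s ^ 2) * (φ s - s * deriv φ s)) :
    let ψ : ℝ → ℝ := fun s => Real.sqrt (1 + u * s ^ 2) * φ (s / Real.sqrt (1 + u * s ^ 2))
    let k₁' := k₁ + u
    let k₂' := k₂ + (k₁ + k₃) * u + u ^ 2
    let k₃' := k₃ + u
    ∀ s : ℝ, 1 + u * s ^ 2 > 0 → s / Real.sqrt (1 + u * s ^ 2) ∈ I →
      (1 + (k₁' + k₃') * s ^ 2 + k₂' * s ^ 4) * deriv (deriv ψ) s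
        = (k₁' + k₂' * s ^ 2) * (ψ s - s * deriv ψ s) := by
  intro ψ k₁' k₂' k₃' s₀ hpos hmem
  have hWpos : 0 < Real.sqrt (1 + u * s₀ ^ 2) := Real.sqrt_pos.mpr hpos
  have hWne : Real.sqrt (1 + u * s₀ ^ 2) ≠ 0 := ne_of_gt hWpos
  have hW2 : Real.sqrt (1 + u * s₀ ^ 2) ^ 2 = 1 + u * s₀ ^ 2 := Real.sq_sqrt hpos.le
  set ψ₁ : ℝ → ℝ := fun x => u * x / Real.sqrt (1 + u * x ^ 2) * φ (x / Real.sqrt (1 + u * x ^ 2))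
      + deriv φ (x / Real.sqrt (1 + u * x ^ 2)) / (1 + u * x ^ 2) with hψ₁def
  have key : ∀ x : ℝ, 0 < 1 + u * x ^ 2 → x / Real.sqrt (1 + u * x ^ 2) ∈ I →
      HasDerivAt ψ (ψ₁ x) x := fun x hx hxI => hasDerivAt_psi u φ hx (hφ₁ _ hxI)
  have ev1 : ∀ᶠ x in nhds s₀, 0 < 1 + u * x ^ 2 := by
    have hcont : Continuous fun x : ℝ => 1 + u * x ^ 2 := by continuity
    exact Filter.eventually_of_mem ((isOpen_lt continuous_const hcont).mem_nhds hpos)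
      fun x hx => hx
  have ev2 : ∀ᶠ x in nhds s₀, x / Real.sqrt (1 + u * x ^ 2) ∈ I := by
    have hc : ContinuousAt (fun x : ℝ => x / Real.sqrt (1 + u * x ^ 2)) s₀ :=
      (hasDerivAt_r u hpos).differentiableAt.continuousAt
    exact Filter.eventually_of_mem (hc (hI.mem_nhds hmem)) fun x hx => hx
  have hEq : deriv ψ =ᶠ[nhds s₀] ψ₁ := by
    filter_upwards [ev1, ev2] with x h1 h2
    exact (key x h1 h2).deriv
  have hd1 : deriv ψ s₀ = ψ₁ s₀ := (key s₀ hpos hmem).deriv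
  have hdd : deriv (deriv ψ) s₀ = deriv ψ₁ s₀ := hEq.deriv_eq
  have hD2 := (hasDerivAt_psi1 u φ hpos (hφ₁ _ hmem) (hφ₂ _ hmem)).deriv
  rw [hdd, hψ₁def, hD2, hd1]
  show (1 + (k₁ + u + (k₃ + u)) * s₀ ^ 2 + (k₂ + (k₁ + k₃) * u + u ^ 2) * s₀ ^ 4) *
        (u / Real.sqrt (1 + u * s₀ ^ 2) ^ 3 *
          (φ (s₀ / Real.sqrt (1 + u * s₀ ^ 2))
            - s₀ / Real.sqrt (1 + u * s₀ ^ 2) * deriv φ (s₀ / Real.sqrt (1 + u * s₀ ^ 2)))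
        + deriv (deriv φ) (s₀ / Real.sqrt (1 + u * s₀ ^ 2)) / Real.sqrt (1 + u * s₀ ^ 2) ^ 5)
      = (k₁ + u + (k₂ + (k₁ + k₃) * u + u ^ 2) * s₀ ^ 2) *
          (Real.sqrt (1 + u * s₀ ^ 2) * φ (s₀ / Real.sqrt (1 + u * s₀ ^ 2)) - s₀ *
            (u * s₀ / Real.sqrt (1 + u * s₀ ^ 2) * φ (s₀ / Real.sqrt (1 + u * s₀ ^ 2))
              + deriv φ (s₀ / Real.sqrt (1 + u * s₀ ^ 2)) / (1 + u * s₀ ^ 2)))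
  exact final_algebra k₁ k₂ k₃ u s₀ (Real.sqrt (1 + u * s₀ ^ 2))
    (φ (s₀ / Real.sqrt (1 + u * s₀ ^ 2))) (deriv φ (s₀ / Real.sqrt (1 + u * s₀ ^ 2)))
    (deriv (deriv φ) (s₀ / Real.sqrt (1 + u * s₀ ^ 2))) hWne hW2 (hode _ hmem)
end

section
/- The power series φ(s) = 1 + εs + 2·Σ_{n≥0} ((−1)ⁿσ^{n+1} s^{2n+2})/((2n+2)(2n+1)·n!) satisfies the ODE φ''(s) = 2σ(φ(s) − sφ'(s)) for all real s, for any real constants σ and ε. -/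
/-!
Differentiating twice term by term gives `φ'' s = 2σ exp (-σ s²)`, the bounds on the
derivatives being dominated by exponential series on every ball. Then `φ - s φ'` has derivative
`-s φ'' s = -2σ s exp (-σ s²)`, the derivative of `exp (-σ s²)`, and both equal `1` at `s = 0`;
hence `φ - s φ' = exp (-σ s²)` and `φ'' = 2σ (φ - s φ')`.
-/

section TermwiseDeriv

variable {α 𝕜 F : Type*} [RCLike 𝕜] [NormedAddCommGroup F] [NormedSpace 𝕜 F] [CompleteSpace F]

theorem hasDerivAt_tsum_of_forall_norm_lt {g g' : α → 𝕜 → F}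
    (hg : ∀ n y, HasDerivAt (g n) (g' n y) y)
    (hg' : ∀ R : ℝ, ∃ u : α → ℝ, Summable u ∧ ∀ n y, ‖y‖ < R → ‖g' n y‖ ≤ u n)
    (hg0 : Summable fun n => g n 0) (y : 𝕜) :
    HasDerivAt (fun z => ∑' n, g n z) (∑' n, g' n y) y := by
  obtain ⟨u, hu, hbound⟩ := hg' (‖y‖ + 1)
  exact hasDerivAt_tsum_of_isPreconnected hu Metric.isOpen_ball
    (convex_ball 0 _).isPreconnected (fun n z _ => hg n z)
    (fun n z hz => hbound n z (mem_ball_zero_iff.1 hz)) (Metric.mem_ball_self (by positivity))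
    hg0 (mem_ball_zero_iff.2 (by linarith))

end TermwiseDeriv

theorem Real.hasSum_mul_pow_div_factorial (a x : ℝ) :
    HasSum (fun n => a * x ^ n / n.factorial) (a * Real.exp x) := by
  simpa only [mul_div_assoc, Real.exp_eq_exp_ℝ] using
    (NormedSpace.expSeries_div_hasSum_exp x).mul_left a

noncomputable section

namespace DouglasODE

open Real

def seriesTerm (σ : ℝ) (n : ℕ) (s : ℝ) : ℝ :=
  ((-1 : ℝ) ^ n * σ ^ (n + 1) * s ^ (2 * n + 2)) /
    ((2 * (n : ℝ) + 2) * (2 * (n : ℝ) + 1) * (n.factorial : ℝ))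

def seriesTerm' (σ : ℝ) (n : ℕ) (s : ℝ) : ℝ :=
  (-1 : ℝ) ^ n * σ ^ (n + 1) * s ^ (2 * n + 1) / ((2 * (n : ℝ) + 1) * n.factorial)

def phi (σ ε s : ℝ) : ℝ := 1 + ε * s + 2 * ∑' n : ℕ, seriesTerm σ n s

section Terms

variable (σ : ℝ) (n : ℕ)

theorem hasDerivAt_seriesTerm (s : ℝ) : HasDerivAt (seriesTerm σ n) (seriesTerm' σ n s) s := by
  have h := ((hasDerivAt_pow (2 * n + 2) s).const_mul ((-1 : ℝ) ^ n * σ ^ (n + 1))).div_const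
    ((2 * (n : ℝ) + 2) * (2 * (n : ℝ) + 1) * (n.factorial : ℝ))
  refine h.congr_deriv ?_
  rw [seriesTerm', show 2 * n + 2 - 1 = 2 * n + 1 by omega]
  have : (2 * (n : ℝ) + 2) ≠ 0 := by positivity
  push_cast
  field_simp

theorem hasDerivAt_seriesTerm' (s : ℝ) :
    HasDerivAt (seriesTerm' σ n) (σ * (-σ * s ^ 2) ^ n / n.factorial) s := by
  have h := ((hasDerivAt_pow (2 * n + 1) s).const_mul ((-1 : ℝ) ^ n * σ ^ (n + 1))).div_const
    ((2 * (n : ℝ) + 1) * (n.factorial : ℝ))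
  refine h.congr_deriv ?_
  rw [Nat.add_sub_cancel]
  have : (2 * (n : ℝ) + 1) ≠ 0 := by positivity
  push_cast
  field_simp
  ring

theorem abs_seriesTerm'_le {s R : ℝ} (hs : |s| < R) :
    |seriesTerm' σ n s| ≤ |σ| * R * ((|σ| * R ^ 2) ^ n / n.factorial) := by
  have hR : |s| ≤ R := hs.le
  have hF : (0 : ℝ) < n.factorial := by positivity
  calc |seriesTerm' σ n s| = |σ| ^ (n + 1) * |s| ^ (2 * n + 1) / ((2 * n + 1) * n.factorial) := by
        simp only [seriesTerm', abs_div, abs_mul, abs_pow, abs_neg, abs_one, one_pow, one_mul,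
          Nat.abs_cast]
        rw [abs_of_pos (by positivity : (0:ℝ) < 2 * n + 1)]
    _ ≤ |σ| ^ (n + 1) * R ^ (2 * n + 1) / n.factorial := by
        have hR0 : 0 ≤ R := (abs_nonneg s).trans hR
        gcongr
        exact le_mul_of_one_le_left hF.le (by linarith [n.cast_nonneg (α := ℝ)])
    _ = _ := by ring

theorem abs_mul_pow_div_factorial_le {s R : ℝ} (hs : |s| < R) :
    |σ * (-σ * s ^ 2) ^ n / n.factorial| ≤ |σ| * ((|σ| * R ^ 2) ^ n / n.factorial) := by
  have hR : |s| ≤ R := hs.le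
  rw [abs_div, abs_mul, abs_pow, abs_mul, abs_neg, abs_pow, Nat.abs_cast, mul_div_assoc]
  gcongr

end Terms

variable (σ ε s : ℝ)

theorem hasDerivAt_tsum_seriesTerm :
    HasDerivAt (fun s => ∑' n, seriesTerm σ n s) (∑' n, seriesTerm' σ n s) s :=
  hasDerivAt_tsum_of_forall_norm_lt (hasDerivAt_seriesTerm σ)
    (fun R => ⟨_, (summable_pow_div_factorial _).mul_left (|σ| * R),
      fun n _ hy => abs_seriesTerm'_le σ n hy⟩)
    (by simp [seriesTerm]) s

theorem hasDerivAt_tsum_seriesTerm' :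
    HasDerivAt (fun s => ∑' n, seriesTerm' σ n s) (σ * exp (-σ * s ^ 2)) s := by
  have h := hasDerivAt_tsum_of_forall_norm_lt (hasDerivAt_seriesTerm' σ)
    (fun R => ⟨_, (summable_pow_div_factorial _).mul_left |σ|,
      fun n _ hy => abs_mul_pow_div_factorial_le σ n hy⟩)
    (by simp [seriesTerm']) s
  rwa [(hasSum_mul_pow_div_factorial σ _).tsum_eq] at h

theorem hasDerivAt_phi : HasDerivAt (phi σ ε) (ε + 2 * ∑' n, seriesTerm' σ n s) s := by
  have h := (((hasDerivAt_id' s).const_mul ε).const_add 1).add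
    ((hasDerivAt_tsum_seriesTerm σ s).const_mul 2)
  rwa [mul_one] at h

theorem hasDerivAt_deriv_phi :
    HasDerivAt (deriv (phi σ ε)) (2 * σ * exp (-σ * s ^ 2)) s := by
  have h := ((hasDerivAt_tsum_seriesTerm' σ s).const_mul 2).const_add ε
  rw [← mul_assoc] at h
  exact h.congr_of_eventuallyEq (.of_forall fun t => (hasDerivAt_phi σ ε t).deriv)

theorem phi_sub_mul_deriv_phi : phi σ ε s - s * deriv (phi σ ε) s = exp (-σ * s ^ 2) := by
  set g := fun t => phi σ ε t - t * deriv (phi σ ε) t - exp (-σ * t ^ 2)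
  have hg : ∀ t, HasDerivAt g 0 t := by
    intro t
    have h := (((hasDerivAt_phi σ ε t).differentiableAt.hasDerivAt).sub
      ((hasDerivAt_id' t).mul (hasDerivAt_deriv_phi σ ε t))).sub
      ((hasDerivAt_pow 2 t).const_mul (-σ)).exp
    refine h.congr_deriv ?_
    ring
  have h0 : g 0 = 0 := by simp [g, phi, seriesTerm]
  have := is_const_of_deriv_eq_zero (fun t => (hg t).differentiableAt) (fun t => (hg t).deriv) s 0
  simp only [g] at this h0
  linarith

end DouglasODE

end

open DouglasODE in
/-- The power series φ(s) = 1 + εs + 2·Σ_{n≥0} ((−1)ⁿσ^{n+1}s^{2n+2})/((2n+2)(2n+1)n!)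
satisfies φ''(s) = 2σ(φ(s) − sφ'(s)) for all real s. -/
theorem series_solution_douglas_ode_delta_zero (σ ε : ℝ) :
    let φ : ℝ → ℝ := fun s => 1 + ε * s +
      2 * ∑' n : ℕ, ((-1 : ℝ) ^ n * σ ^ (n + 1) * s ^ (2 * n + 2)) /
        ((2 * (n : ℝ) + 2) * (2 * (n : ℝ) + 1) * (n.factorial : ℝ))
    ∀ s : ℝ, deriv (deriv φ) s = 2 * σ * (φ s - s * deriv φ s) := by
  intro φ s
  change deriv (deriv (phi σ ε)) s = 2 * σ * (phi σ ε s - s * deriv (phi σ ε) s)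
  rw [(hasDerivAt_deriv_phi σ ε s).deriv, phi_sub_mul_deriv_phi]
end

section
/- On ℝⁿ (n ≥ 2) with constant μ ∈ ℝ, on the open set where 1+μ|x|² > 0, the vector field W(x) = √(1+μ|x|²)·(λx + a) (with λ ∈ ℝ, a ∈ ℝⁿ constants) is a conformal vector field of the Riemannian metric h given by h(x,y)² = ((1+μ|x|²)|y|² − μ⟨x,y⟩²)/(1+μ|x|²)², i.e. the Lie derivative of the metric tensor along W is a scalar function times the metric tensor. -/
/-!
Write `q = 1 + μ|x|²`, `s = √q` and `V = λx + a`, so that `W = s V`. Since `∂_w q = 2μ⟨x, w⟩`,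
the derivative of `W` is `DW(w) = sλ w + (μ⟨x, w⟩ / s) V`. The terms `g(DW e_i, e_j)` and
`g(e_i, DW e_j)` are sums of `DW` against a row of `g`, which the shape of `g` reduces to `⟨x, ·⟩`,
so every term of `(L_W g)_{ij}` is an explicit rational expression in `s`, `|x|²`, `⟨x, a⟩` and
the coordinates of `x` and `a`. Clearing denominators, `(L_W g)_{ij} - (2(λ - μ⟨a, x⟩) / s) g_{ij}`
becomes a multiple of `s² - q`.
-/

open Finset Matrix

theorem ContinuousLinearMap.sum_smul_apply_single {ι R M : Type*} [Fintype ι] [DecidableEq ι]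
    [CommSemiring R] [TopologicalSpace R] [AddCommMonoid M] [Module R M] [TopologicalSpace M]
    (f : (ι → R) →L[R] M) (w : ι → R) : ∑ k, w k • f (Pi.single k 1) = f w := by
  conv_rhs => rw [← Finset.univ_sum_single (M := fun _ => R) w]
  rw [map_sum]
  refine Finset.sum_congr rfl fun k _ => ?_
  rw [← map_smul, ← Pi.single_smul', smul_eq_mul, mul_one]

theorem HasLineDerivAt.fderiv_apply_eq {𝕜 E F : Type*} [NontriviallyNormedField 𝕜]
    [NormedAddCommGroup E] [NormedSpace 𝕜 E] [NormedAddCommGroup F] [NormedSpace 𝕜 F]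
    {f : E → F} {f' : F} {x v : E} (h : HasLineDerivAt 𝕜 f f' x v)
    (hf : DifferentiableAt 𝕜 f x) : fderiv 𝕜 f x v = f' :=
  (hf.hasFDerivAt.hasLineDerivAt v).unique h

theorem hasLineDerivAt_apply {𝕜 ι : Type*} [NontriviallyNormedField 𝕜] [Fintype ι]
    (x w : ι → 𝕜) (i : ι) : HasLineDerivAt 𝕜 (fun y : ι → 𝕜 => y i) (w i) x w :=
  (hasFDerivAt_apply (𝕜 := 𝕜) i x).hasLineDerivAt w

namespace ProjectiveModel

variable {ι : Type*} [Fintype ι] (μ : ℝ)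

noncomputable def weight (x : ι → ℝ) : ℝ := 1 + μ * ∑ i, x i ^ 2

theorem weight_eq (x : ι → ℝ) : weight μ x = 1 + μ * (x ⬝ᵥ x) := by
  simp only [weight, dotProduct, sq]

theorem differentiable_weight : Differentiable ℝ (weight (ι := ι) μ) := by
  unfold weight
  fun_prop

theorem hasLineDerivAt_weight (x w : ι → ℝ) :
    HasLineDerivAt ℝ (weight μ) (2 * μ * (x ⬝ᵥ w)) x w := by
  refine ((HasDerivAt.fun_sum fun i _ => ((hasLineDerivAt_apply x w i).fun_pow 2)).const_mul μ
    |>.const_add 1).congr_deriv ?_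
  simp only [zero_smul, add_zero, dotProduct, mul_sum]
  ring_nf

noncomputable def conformalField (lam : ℝ) (a x : ι → ℝ) (i : ι) : ℝ :=
  √(weight μ x) * (lam * x i + a i)

variable {μ} {x : ι → ℝ}

theorem conformalField_eq (lam : ℝ) (a x : ι → ℝ) :
    conformalField μ lam a x = √(weight μ x) • (lam • x + a) :=
  rfl

theorem differentiableAt_conformalField (hx : 0 < weight μ x) (lam : ℝ) (a : ι → ℝ) (k : ι) :
    DifferentiableAt ℝ (fun y => conformalField μ lam a y k) x := by
  have := (differentiable_weight μ).differentiableAt (x := x)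
  unfold conformalField
  fun_prop (disch := exact hx.ne')

theorem hasLineDerivAt_conformalField (hx : 0 < weight μ x) (lam : ℝ) (a w : ι → ℝ) (k : ι) :
    HasLineDerivAt ℝ (fun y => conformalField μ lam a y k)
      (√(weight μ x) * lam * w k + μ * (x ⬝ᵥ w) / √(weight μ x) * (lam * x k + a k)) x w := by
  have h := (HasDerivAt.sqrt (hasLineDerivAt_weight μ x w) (by simpa using hx.ne')).fun_mul
    (((hasLineDerivAt_apply x w k).const_mul lam).add_const (a k))
  refine h.congr_deriv ?_
  simp only [zero_smul, add_zero]
  field_simp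
  ring

theorem fderiv_conformalField_apply (hx : 0 < weight μ x) (lam : ℝ) (a w : ι → ℝ) (k : ι) :
    fderiv ℝ (fun y => conformalField μ lam a y k) x w =
      ((√(weight μ x) * lam) • w + (μ * (x ⬝ᵥ w) / √(weight μ x)) • (lam • x + a)) k :=
  (hasLineDerivAt_conformalField hx lam a w k).fderiv_apply_eq
    (differentiableAt_conformalField hx lam a k)

variable [DecidableEq ι]

variable (μ) in
noncomputable def projectiveMetric (x : ι → ℝ) (i j : ι) : ℝ :=
  (weight μ x * (if i = j then 1 else 0) - μ * x i * x j) / weight μ x ^ 2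

theorem projectiveMetric_comm (x : ι → ℝ) (i j : ι) :
    projectiveMetric μ x i j = projectiveMetric μ x j i := by
  simp only [projectiveMetric, eq_comm, mul_right_comm]

theorem sum_projectiveMetric_mul (x v : ι → ℝ) (j : ι) :
    ∑ k, projectiveMetric μ x k j * v k =
      (weight μ x * v j - μ * x j * (x ⬝ᵥ v)) / weight μ x ^ 2 := by
  simp only [projectiveMetric, dotProduct, div_mul_eq_mul_div, ← sum_div, sub_mul,
    sum_sub_distrib, mul_assoc, ← mul_sum, ite_mul, one_mul, zero_mul, sum_ite_eq', mem_univ,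
    if_true]
  congr 3
  rw [mul_sum]
  exact sum_congr rfl fun k _ => mul_left_comm _ _ _

theorem differentiableAt_projectiveMetric (hx : weight μ x ≠ 0) (i j : ι) :
    DifferentiableAt ℝ (fun y => projectiveMetric μ y i j) x := by
  have := (differentiable_weight μ).differentiableAt (x := x)
  unfold projectiveMetric
  fun_prop (disch := simpa using hx)

theorem hasLineDerivAt_projectiveMetric (hx : weight μ x ≠ 0) (w : ι → ℝ) (i j : ι) :
    HasLineDerivAt ℝ (fun y => projectiveMetric μ y i j)
      ((2 * μ * (x ⬝ᵥ w) * (if i = j then 1 else 0) - μ * (w i * x j + x i * w j)) /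
        weight μ x ^ 2 - 4 * μ * (x ⬝ᵥ w) / weight μ x * projectiveMetric μ x i j) x w := by
  have hq := hasLineDerivAt_weight μ x w
  have hnum := (hq.mul_const (if i = j then 1 else 0)).fun_sub
    (((hasLineDerivAt_apply x w i).const_mul μ).fun_mul (hasLineDerivAt_apply x w j))
  refine (hnum.fun_div (hq.fun_pow 2) (by simpa using hx)).congr_deriv ?_
  simp only [zero_smul, add_zero, projectiveMetric]
  field_simp
  ring

theorem fderiv_projectiveMetric_apply (hx : weight μ x ≠ 0) (w : ι → ℝ) (i j : ι) :
    fderiv ℝ (fun y => projectiveMetric μ y i j) x w =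
      (2 * μ * (x ⬝ᵥ w) * (if i = j then 1 else 0) - μ * (w i * x j + x i * w j)) /
        weight μ x ^ 2 - 4 * μ * (x ⬝ᵥ w) / weight μ x * projectiveMetric μ x i j :=
  (hasLineDerivAt_projectiveMetric hx w i j).fderiv_apply_eq
    (differentiableAt_projectiveMetric hx i j)

noncomputable def lieDerivMetric (g : (ι → ℝ) → ι → ι → ℝ) (W : (ι → ℝ) → ι → ℝ)
    (x : ι → ℝ) (i j : ι) : ℝ :=
  ∑ k, W x k * fderiv ℝ (fun y => g y i j) x (Pi.single k 1)
    + ∑ k, g x k j * fderiv ℝ (fun y => W y k) x (Pi.single i 1)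
    + ∑ k, g x i k * fderiv ℝ (fun y => W y k) x (Pi.single j 1)

theorem lieDerivMetric_eq (g : (ι → ℝ) → ι → ι → ℝ) (W : (ι → ℝ) → ι → ℝ) (x : ι → ℝ)
    (i j : ι) :
    lieDerivMetric g W x i j = fderiv ℝ (fun y => g y i j) x (W x)
      + ∑ k, g x k j * fderiv ℝ (fun y => W y k) x (Pi.single i 1)
      + ∑ k, g x i k * fderiv ℝ (fun y => W y k) x (Pi.single j 1) := by
  rw [lieDerivMetric, ← (fderiv ℝ (fun y => g y i j) x).sum_smul_apply_single]
  rfl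

theorem lieDerivMetric_projectiveMetric_conformalField (hx : 0 < weight μ x) (lam : ℝ)
    (a : ι → ℝ) (i j : ι) :
    lieDerivMetric (projectiveMetric μ) (conformalField μ lam a) x i j =
      2 * (lam - μ * (a ⬝ᵥ x)) / √(weight μ x) * projectiveMetric μ x i j := by
  rw [lieDerivMetric_eq, fderiv_projectiveMetric_apply hx.ne']
  simp only [projectiveMetric_comm x i, sum_projectiveMetric_mul, fderiv_conformalField_apply hx]
  rw [conformalField_eq]
  simp only [dotProduct_add, dotProduct_smul, smul_eq_mul, dotProduct_single, Pi.add_apply,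
    Pi.smul_apply, Pi.single_apply, mul_one, projectiveMetric, weight_eq, dotProduct_comm a x,
    @eq_comm _ j i]
  have hq : 0 < 1 + μ * (x ⬝ᵥ x) := weight_eq (μ := μ) x ▸ hx
  have hs := Real.sq_sqrt hq.le
  have hs0 := (Real.sqrt_pos.2 hq).ne'
  generalize √(1 + μ * (x ⬝ᵥ x)) = s at hs hs0 ⊢
  generalize x ⬝ᵥ x = S at hs hq ⊢
  generalize x ⬝ᵥ a = T
  generalize (if i = j then (1 : ℝ) else 0) = δ
  field_simp
  -- once denominators are cleared the goal is affine in `s ^ 2`; this is its `s ^ 2`-coefficient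
  linear_combination (2 * (lam - μ * T) * ((1 + μ * S) * δ - 2 * μ * x i * x j)
    - μ * (1 + μ * S) * (x i * a j + a i * x j)) * hs

end ProjectiveModel

open Finset in
theorem conformal_vector_field_constant_curvature_general
    (n : ℕ) (μ lam : ℝ) (a : Fin n → ℝ) :
    let normsq : (Fin n → ℝ) → ℝ := fun x => ∑ i, x i ^ 2
    let g : (Fin n → ℝ) → Fin n → Fin n → ℝ := fun x i j =>
      ((1 + μ * normsq x) * (if i = j then 1 else 0) - μ * x i * x j) /
        (1 + μ * normsq x) ^ 2
    let W : (Fin n → ℝ) → Fin n → ℝ := fun x i =>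
      Real.sqrt (1 + μ * normsq x) * (lam * x i + a i)
    ∃ c : (Fin n → ℝ) → ℝ, ∀ x : Fin n → ℝ, 1 + μ * normsq x > 0 →
      ∀ i j : Fin n,
        (∑ k, W x k * fderiv ℝ (fun y => g y i j) x (Pi.single k 1))
          + (∑ k, g x k j * fderiv ℝ (fun y => W y k) x (Pi.single i 1))
          + (∑ k, g x i k * fderiv ℝ (fun y => W y k) x (Pi.single j 1))
        = c x * g x i j := by
  intro normsq g W
  exact ⟨fun x => 2 * (lam - μ * (a ⬝ᵥ x)) / √(ProjectiveModel.weight μ x), fun x hx i j =>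
    ProjectiveModel.lieDerivMetric_projectiveMetric_conformalField hx lam a i j⟩

open Finset in
/-- On the open set {x | 1+μ|x|² > 0} of ℝⁿ (n ≥ 2), the vector field
W(x) = √(1+μ|x|²)(λx + a) is conformal for the constant-curvature metric
g_{ij}(x) = ((1+μ|x|²)δ_{ij} − μx_ix_j)/(1+μ|x|²)², i.e. the Lie derivative
(L_W g)_{ij} = Σ_k W^k ∂_k g_{ij} + Σ_k g_{kj} ∂_i W^k + Σ_k g_{ik} ∂_j W^k
equals c(x)·g_{ij}(x) for some scalar function c. -/
theorem conformal_vector_field_constant_curvature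
    (n : ℕ) (hn : 2 ≤ n) (μ lam : ℝ) (a : Fin n → ℝ) :
    let normsq : (Fin n → ℝ) → ℝ := fun x => ∑ i, x i ^ 2
    let g : (Fin n → ℝ) → Fin n → Fin n → ℝ := fun x i j =>
      ((1 + μ * normsq x) * (if i = j then 1 else 0) - μ * x i * x j) /
        (1 + μ * normsq x) ^ 2
    let W : (Fin n → ℝ) → Fin n → ℝ := fun x i =>
      Real.sqrt (1 + μ * normsq x) * (lam * x i + a i)
    ∃ c : (Fin n → ℝ) → ℝ, ∀ x : Fin n → ℝ, 1 + μ * normsq x > 0 →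
      ∀ i j : Fin n,
        (∑ k, W x k * fderiv ℝ (fun y => g y i j) x (Pi.single k 1))
          + (∑ k, g x k j * fderiv ℝ (fun y => W y k) x (Pi.single i 1))
          + (∑ k, g x i k * fderiv ℝ (fun y => W y k) x (Pi.single j 1))
        = c x * g x i j :=
  conformal_vector_field_constant_curvature_general n μ lam a
end
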